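/- (Hexagon duality.) For all positive reals x, y, z, setting A = θ(x,y,z), B = θ(y,z,x), C = θ(z,x,y) (the lengths of the three remaining sides of the right-angled hexagon with non-adjacent side lengths x, y, z), one has x = θ(A,B,C), y = θ(B,C,A) and z = θ(C,A,B); equivalently, cosh x = (cosh A + cosh B · cosh C)/(sinh B · sinh C) and cyclically. -/

import Mathlib

/-!
Write `a = cosh x`, `b = cosh y`, `c = cosh z`. The cosine law gives
`cosh A = (a + b c) / (sinh y sinh z)` and `sinh A = √D / (sinh y sinh z)`, where
`D = a² + b² + c² + 2 a b c - 1` is symmetric in `a, b, c`; the same holds cyclically for `B`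
and `C`. Substituting these into the cosine law for the sides `A, B, C`, the common factor `D`
cancels and what remains is `a`.
-/

open Real Filter Set

noncomputable def arcosh (x : ℝ) : ℝ := Real.log (x + Real.sqrt (x ^ 2 - 1))

/-- The length of the side of a right-angled hyperbolic hexagon opposite the side of
length `x`, where the three pairwise non-adjacent sides have lengths `x, y, z`. -/
noncomputable def theta (x y z : ℝ) : ℝ :=
  _root_.arcosh ((Real.cosh x + Real.cosh y * Real.cosh z) / (Real.sinh y * Real.sinh z))

-- `_root_.arcosh` is definitionally Mathlib's `Real.arcosh`, whose API is used below.
theorem theta_eq (x y z : ℝ) :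
    theta x y z = Real.arcosh ((cosh x + cosh y * cosh z) / (sinh y * sinh z)) :=
  rfl

-- `(a + b c)² - (b² - 1)(c² - 1)`, the numerator of `sinh² θ(x, y, z)` in terms of the cosines.
def hexagonGram (a b c : ℝ) : ℝ := a ^ 2 + b ^ 2 + c ^ 2 + 2 * a * b * c - 1

theorem hexagonGram_pos {a b c : ℝ} (ha : 1 ≤ a) (hb : 1 ≤ b) (hc : 1 ≤ c) :
    0 < hexagonGram a b c := by
  unfold hexagonGram
  nlinarith [mul_nonneg (mul_nonneg (by linarith : (0 : ℝ) ≤ a) (by linarith : (0 : ℝ) ≤ b))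
    (by linarith : (0 : ℝ) ≤ c)]

theorem one_lt_cosh_add_cosh_mul_cosh_div {y z : ℝ} (hy : 0 < y) (hz : 0 < z) (x : ℝ) :
    1 < (cosh x + cosh y * cosh z) / (sinh y * sinh z) := by
  have hyz : 0 < sinh y * sinh z := mul_pos (sinh_pos_iff.mpr hy) (sinh_pos_iff.mpr hz)
  rw [one_lt_div hyz]
  linarith [cosh_sub y z, cosh_pos x, cosh_pos (y - z)]

theorem cosh_theta {y z : ℝ} (hy : 0 < y) (hz : 0 < z) (x : ℝ) :
    cosh (theta x y z) = (cosh x + cosh y * cosh z) / (sinh y * sinh z) := by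
  rw [theta_eq, cosh_arcosh (one_lt_cosh_add_cosh_mul_cosh_div hy hz x).le]

theorem sinh_theta {y z : ℝ} (hy : 0 < y) (hz : 0 < z) (x : ℝ) :
    sinh (theta x y z) = √(hexagonGram (cosh x) (cosh y) (cosh z)) / (sinh y * sinh z) := by
  have hyz : 0 < sinh y * sinh z := mul_pos (sinh_pos_iff.mpr hy) (sinh_pos_iff.mpr hz)
  have hsq : ((cosh x + cosh y * cosh z) / (sinh y * sinh z)) ^ 2 - 1
      = hexagonGram (cosh x) (cosh y) (cosh z) / (sinh y * sinh z) ^ 2 := by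
    rw [hexagonGram]
    field_simp
    linear_combination (cosh z ^ 2 - 1) * cosh_sq y + sinh y ^ 2 * cosh_sq z
  rw [theta_eq, sinh_arcosh (one_lt_cosh_add_cosh_mul_cosh_div hy hz x).le, hsq,
    sqrt_div' _ (sq_nonneg _), sqrt_sq hyz.le]

-- The cosine law for the sides `A, B, C`, with `cosh` and `sinh` of `B` and `C` substituted.
theorem dual_cosine_law_identity {a b c sx sy sz s : ℝ} (hsx : sx ^ 2 = a ^ 2 - 1)
    (hsx0 : sx ≠ 0) (hsy0 : sy ≠ 0) (hsz0 : sz ≠ 0) (hs : s ^ 2 = hexagonGram a b c)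
    (hs0 : s ≠ 0) :
    ((a + b * c) / (sy * sz) + (b + c * a) / (sz * sx) * ((c + a * b) / (sx * sy)))
      / (s / (sz * sx) * (s / (sx * sy))) = a := by
  rw [div_eq_iff (by positivity)]
  field_simp
  rw [hs, hexagonGram]
  linear_combination (a + b * c) * hsx

theorem cosh_eq_of_theta {x y z : ℝ} (hx : 0 < x) (hy : 0 < y) (hz : 0 < z) :
    cosh x = (cosh (theta x y z) + cosh (theta y z x) * cosh (theta z x y))
      / (sinh (theta y z x) * sinh (theta z x y)) := by
  have hD : hexagonGram (cosh y) (cosh z) (cosh x) = hexagonGram (cosh x) (cosh y) (cosh z) := by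
    unfold hexagonGram; ring
  have hD' : hexagonGram (cosh z) (cosh x) (cosh y) = hexagonGram (cosh x) (cosh y) (cosh z) := by
    unfold hexagonGram; ring
  have hDpos := hexagonGram_pos (one_le_cosh x) (one_le_cosh y) (one_le_cosh z)
  rw [cosh_theta hy hz, cosh_theta hz hx, cosh_theta hx hy, sinh_theta hz hx, sinh_theta hx hy,
    hD, hD', dual_cosine_law_identity (by rw [cosh_sq x]; ring) (sinh_pos_iff.mpr hx).ne'
      (sinh_pos_iff.mpr hy).ne' (sinh_pos_iff.mpr hz).ne' (sq_sqrt hDpos.le)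
      (sqrt_pos.mpr hDpos).ne']

theorem theta_theta {x y z : ℝ} (hx : 0 < x) (hy : 0 < y) (hz : 0 < z) :
    theta (theta x y z) (theta y z x) (theta z x y) = x := by
  rw [theta_eq, ← cosh_eq_of_theta hx hy hz, arcosh_cosh hx.le]

theorem stmt_1 (x y z : ℝ) (hx : 0 < x) (hy : 0 < y) (hz : 0 < z) :
    x = theta (theta x y z) (theta y z x) (theta z x y) ∧
    y = theta (theta y z x) (theta z x y) (theta x y z) ∧
    z = theta (theta z x y) (theta x y z) (theta y z x) ∧
    Real.cosh x = (Real.cosh (theta x y z)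
        + Real.cosh (theta y z x) * Real.cosh (theta z x y))
      / (Real.sinh (theta y z x) * Real.sinh (theta z x y)) ∧
    Real.cosh y = (Real.cosh (theta y z x)
        + Real.cosh (theta z x y) * Real.cosh (theta x y z))
      / (Real.sinh (theta z x y) * Real.sinh (theta x y z)) ∧
    Real.cosh z = (Real.cosh (theta z x y)
        + Real.cosh (theta x y z) * Real.cosh (theta y z x))
      / (Real.sinh (theta x y z) * Real.sinh (theta y z x)) :=
  ⟨(theta_theta hx hy hz).symm, (theta_theta hy hz hx).symm, (theta_theta hz hx hy).symm,
    cosh_eq_of_theta hx hy hz, cosh_eq_of_theta hy hz hx, cosh_eq_of_theta hz hx hy⟩
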